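/- arXiv:1111.5066 — 2 statements merged into one kernel-verified Lean document; each statement's English description precedes it below -/
import Mathlib

section
/- Let F₀ be a Minkowski conic norm on V with conic domain A₀, let β be a linear form on V, and let q ∈ ℝ with q ≠ 0. Consider the Matsumoto-type function F(v) = F₀(v)^{q+1} / |F₀(v) − β(v)|^q on the conic domain A = {v ∈ A₀ : F₀(v) ≠ β(v)}, which is a Minkowski conic pseudo-norm. If q > 0 or q ≤ −1, then the restriction of F to A* = {v ∈ A₀ : (F₀(v) − (q+1)β(v))(F₀(v) − β(v)) > 0} is a Minkowski conic norm (its fundamental tensor is positive definite at every v ∈ A* ∖ {0}); and if dim V = N > 2, then the fundamental tensor of F is not positive definite at any v ∈ A ∖ A*. In particular, the Matsumoto metric F = F₀²/|F₀ − β| (case q = 1) has positive definite fundamental tensor on {v ∈ A₀ : (F₀(v) − 2β(v))(F₀(v) − β(v)) > 0}. -/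
open Set Topology

variable {V : Type*} [NormedAddCommGroup V] [NormedSpace ℝ V] [FiniteDimensional ℝ V]

/-- A conic domain of `V`: a nonempty open subset closed under positive scalar multiplication. -/
def IsConicDomain (A : Set V) : Prop :=
  A.Nonempty ∧ IsOpen A ∧ ∀ v ∈ A, ∀ l : ℝ, 0 < l → l • v ∈ A

/-- The fundamental tensor `g_v(u,w) = ∂²/∂t∂s [½ F(v+tu+sw)²]|₀`. -/
noncomputable def fundTensor (F : V → ℝ) (v u w : V) : ℝ :=
  deriv (fun t : ℝ => deriv (fun s : ℝ => (1 / 2) * (F (v + t • u + s • w)) ^ 2) 0) 0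

/-- A Minkowski conic pseudo-norm on `V` with conic domain `A`
(the function is defined on all of `V`, but only its values on `A` are relevant). -/
structure IsMinkowskiConicPseudoNorm (A : Set V) (F : V → ℝ) : Prop where
  conic : IsConicDomain A
  nonneg : ∀ v ∈ A, 0 ≤ F v
  eq_zero : ∀ v ∈ A, F v = 0 → v = 0
  homog : ∀ v ∈ A, ∀ l : ℝ, 0 < l → F (l • v) = l * F v
  smooth : ContDiffOn ℝ (⊤ : ℕ∞) F (A \ {0})

/-- A Minkowski conic norm: a Minkowski conic pseudo-norm with positive definite
fundamental tensor at every nonzero vector of its domain. -/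
def IsMinkowskiConicNorm (A : Set V) (F : V → ℝ) : Prop :=
  IsMinkowskiConicPseudoNorm A F ∧
    ∀ v ∈ A, v ≠ 0 → ∀ w : V, w ≠ 0 → 0 < fundTensor F v w w

/-- The angular metric `h_v(w,w) = g_v(w,w) − g_v(v,w)²/F(v)²`. -/
noncomputable def angular (F : V → ℝ) (v w : V) : ℝ :=
  fundTensor F v w w - (fundTensor F v v w) ^ 2 / (F v) ^ 2

open Filter

lemma deriv2_eq_of_hasDerivAt {f Df : ℝ → ℝ} {X : ℝ}
    (hf : ∀ᶠ t in 𝓝 (0:ℝ), HasDerivAt f (Df t) t) (hDf : HasDerivAt Df X 0) :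
    deriv (deriv f) 0 = X := by
  have h1 : deriv f =ᶠ[𝓝 (0:ℝ)] Df := hf.mono fun t ht => ht.deriv
  rw [h1.deriv_eq]
  exact hDf.deriv

lemma diag_eq (F : V → ℝ) (v w : V) :
    fundTensor F v w w
      = deriv (deriv (fun t : ℝ => (1 / 2 : ℝ) * (F (v + t • w)) ^ 2)) 0 := by
  unfold fundTensor
  have : (fun t : ℝ => deriv (fun s : ℝ => (1 / 2 : ℝ) * (F (v + t • w + s • w)) ^ 2) 0)
      = fun t : ℝ => deriv (fun t : ℝ => (1 / 2 : ℝ) * (F (v + t • w)) ^ 2) t := by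
    funext t
    have h2 : (fun s : ℝ => (1 / 2 : ℝ) * (F (v + t • w + s • w)) ^ 2)
        = fun s : ℝ => (fun r : ℝ => (1 / 2 : ℝ) * (F (v + r • w)) ^ 2) (t + s) := by
      funext s
      have h3 : v + t • w + s • w = v + (t + s) • w := by rw [add_smul, add_assoc]
      rw [h3]
    rw [h2]
    exact (deriv_comp_const_add (fun r : ℝ => (1 / 2 : ℝ) * (F (v + r • w)) ^ 2) t 0).trans
      (by rw [add_zero])
  rw [this]

lemma snd_eq {G : V → ℝ} {U : Set V} (hU : IsOpen U) (hG : ContDiffOn ℝ (⊤ : ℕ∞) G U) {v : V}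
    (hv : v ∈ U) (u w : V) :
    deriv (fun t : ℝ => deriv (fun s : ℝ => G (v + t • u + s • w)) 0) 0
      = fderiv ℝ (fderiv ℝ G) v u w := by
  have hdiff : ∀ x ∈ U, HasFDerivAt G (fderiv ℝ G x) x := fun x hx =>
    ((hG.contDiffAt (hU.mem_nhds hx)).differentiableAt (by simp)).hasFDerivAt
  have hG' : ContDiffAt ℝ 1 (fderiv ℝ G) v :=
    (hG.contDiffAt (hU.mem_nhds hv)).fderiv_right ((by norm_cast))
  have hD2 : HasFDerivAt (fderiv ℝ G) (fderiv ℝ (fderiv ℝ G) v) v :=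
    (hG'.differentiableAt one_ne_zero).hasFDerivAt
  -- the outer function agrees near 0 with t ↦ fderiv G (v + t•u) w
  have hline : Continuous (fun t : ℝ => v + t • u) := by continuity
  have hmem : ∀ᶠ t in 𝓝 (0:ℝ), v + t • u ∈ U := by
    have : (fun t : ℝ => v + t • u) ⁻¹' U ∈ 𝓝 (0:ℝ) := by
      apply hline.continuousAt.preimage_mem_nhds
      simpa using hU.mem_nhds hv
    exact this
  have heq : (fun t : ℝ => deriv (fun s : ℝ => G (v + t • u + s • w)) 0)
      =ᶠ[𝓝 (0:ℝ)] fun t : ℝ => fderiv ℝ G (v + t • u) w := by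
    filter_upwards [hmem] with t ht
    have hl : HasDerivAt (fun s : ℝ => v + t • u + s • w) w 0 := by
      simpa using ((hasDerivAt_id (0:ℝ)).smul_const w).const_add (v + t • u)
    have h0 : v + t • u = v + t • u + (0:ℝ) • w := by simp
    have hd := hdiff _ ht
    rw [h0] at hd
    have h2 := hd.comp_hasDerivAt 0 hl
    exact h2.deriv.trans (by rw [← h0])
  rw [heq.deriv_eq]
  have hcur : HasDerivAt (fun t : ℝ => fderiv ℝ G (v + t • u) w)
      (fderiv ℝ (fderiv ℝ G) v u w) 0 := by
    have hl : HasDerivAt (fun t : ℝ => v + t • u) u 0 := by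
      simpa using ((hasDerivAt_id (0:ℝ)).smul_const u).const_add v
    have h1 : HasFDerivAt (fun x => fderiv ℝ G x w)
        ((ContinuousLinearMap.apply ℝ ℝ w).comp (fderiv ℝ (fderiv ℝ G) v)) v :=
      (ContinuousLinearMap.apply ℝ ℝ w).hasFDerivAt.comp v hD2
    have h0 : v = v + (0:ℝ) • u := by simp
    rw [h0] at h1
    have := h1.comp_hasDerivAt 0 hl
    simpa [Function.comp_def] using this
  exact hcur.deriv

section Euler

variable {A₀ : Set V} {F₀ : V → ℝ}

/-- the halved square of `F₀` -/
private noncomputable def Gsq (F₀ : V → ℝ) : V → ℝ := fun x => (1 / 2 : ℝ) * (F₀ x) ^ 2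

lemma Gsq_smooth (hsm : ContDiffOn ℝ (⊤ : ℕ∞) F₀ (A₀ \ {0})) :
    ContDiffOn ℝ (⊤ : ℕ∞) (Gsq F₀) (A₀ \ {0}) := by
  have : ContDiffOn ℝ (⊤ : ℕ∞) (fun x => F₀ x ^ 2) (A₀ \ {0}) := hsm.pow 2
  exact this.const_smul (1/2 : ℝ)

lemma fund_eq_T (hA₀ : IsOpen A₀) (hsm : ContDiffOn ℝ (⊤ : ℕ∞) F₀ (A₀ \ {0}))
    {v : V} (hv : v ∈ A₀) (hv0 : v ≠ 0) (u w : V) :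
    fundTensor F₀ v u w = fderiv ℝ (fderiv ℝ (Gsq F₀)) v u w := by
  have hU : IsOpen (A₀ \ {0}) := hA₀.sdiff isClosed_singleton
  exact snd_eq hU (Gsq_smooth hsm) ⟨hv, hv0⟩ u w

lemma euler0 (hA₀ : IsOpen A₀) (hsm : ContDiffOn ℝ (⊤ : ℕ∞) F₀ (A₀ \ {0}))
    (hhom : ∀ v ∈ A₀, ∀ l : ℝ, 0 < l → F₀ (l • v) = l * F₀ v)
    {v : V} (hv : v ∈ A₀) (hv0 : v ≠ 0) : fderiv ℝ F₀ v v = F₀ v := by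
  have hU : IsOpen (A₀ \ {0}) := hA₀.sdiff isClosed_singleton
  have hvU : v ∈ A₀ \ {0} := ⟨hv, hv0⟩
  have hdiff : DifferentiableAt ℝ F₀ v :=
    (hsm.contDiffAt (hU.mem_nhds hvU)).differentiableAt (by simp)
  have hl : HasDerivAt (fun l : ℝ => l • v) v 1 := by
    simpa using (hasDerivAt_id (1:ℝ)).smul_const v
  have h1v : (1:ℝ) • v = v := one_smul _ _
  have hA : HasDerivAt (fun l : ℝ => F₀ (l • v)) (fderiv ℝ F₀ v v) 1 := by
    have hd : HasFDerivAt F₀ (fderiv ℝ F₀ v) ((1:ℝ) • v) := by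
      rw [h1v]; exact hdiff.hasFDerivAt
    exact hd.comp_hasDerivAt 1 hl
  have heq : (fun l : ℝ => F₀ (l • v)) =ᶠ[𝓝 (1:ℝ)] fun l => l * F₀ v := by
    filter_upwards [eventually_gt_nhds (show (0:ℝ) < 1 by norm_num)] with l hl'
    exact hhom v hv l hl'
  have hB : HasDerivAt (fun l : ℝ => F₀ (l • v)) (F₀ v) 1 := by
    have : HasDerivAt (fun l : ℝ => l * F₀ v) (F₀ v) 1 := by
      simpa using (hasDerivAt_id (1:ℝ)).mul_const (F₀ v)
    exact this.congr_of_eventuallyEq heq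
  exact hA.unique hB

lemma fderiv_Gsq (hA₀ : IsOpen A₀) (hsm : ContDiffOn ℝ (⊤ : ℕ∞) F₀ (A₀ \ {0}))
    {x : V} (hx : x ∈ A₀) (hx0 : x ≠ 0) :
    fderiv ℝ (Gsq F₀) x = F₀ x • fderiv ℝ F₀ x := by
  have hU : IsOpen (A₀ \ {0}) := hA₀.sdiff isClosed_singleton
  have hdiff : DifferentiableAt ℝ F₀ x :=
    (hsm.contDiffAt (hU.mem_nhds ⟨hx, hx0⟩)).differentiableAt (by simp)
  have h1 : HasFDerivAt (fun y => F₀ y * F₀ y)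
      (F₀ x • fderiv ℝ F₀ x + F₀ x • fderiv ℝ F₀ x) x :=
    hdiff.hasFDerivAt.mul hdiff.hasFDerivAt
  have h2 : HasFDerivAt (Gsq F₀) ((1/2 : ℝ) • (F₀ x • fderiv ℝ F₀ x + F₀ x • fderiv ℝ F₀ x)) x := by
    have h3 := h1.const_smul (1/2 : ℝ)
    have : ((1/2 : ℝ) • fun y => F₀ y * F₀ y) = Gsq F₀ := by
      funext y; simp only [Pi.smul_apply, smul_eq_mul, Gsq]; ring
    rwa [this] at h3
  have := h2.fderiv
  rw [this]
  ext u
  simp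
  ring

end Euler

section Euler2

variable {A₀ : Set V} {F₀ : V → ℝ}

lemma fderiv_Gsq_smul (hA₀ : IsOpen A₀) (hsm : ContDiffOn ℝ (⊤ : ℕ∞) F₀ (A₀ \ {0}))
    (hhom : ∀ v ∈ A₀, ∀ l : ℝ, 0 < l → F₀ (l • v) = l * F₀ v)
    (hconic : ∀ v ∈ A₀, ∀ l : ℝ, 0 < l → l • v ∈ A₀)
    {v : V} (hv : v ∈ A₀) (hv0 : v ≠ 0) {l : ℝ} (hl : 0 < l) :
    fderiv ℝ (Gsq F₀) (l • v) = l • fderiv ℝ (Gsq F₀) v := by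
  have hU : IsOpen (A₀ \ {0}) := hA₀.sdiff isClosed_singleton
  have hGsm := Gsq_smooth (A₀ := A₀) hsm
  have hdiff : ∀ x ∈ A₀ \ {0}, HasFDerivAt (Gsq F₀) (fderiv ℝ (Gsq F₀) x) x := fun x hx =>
    ((hGsm.contDiffAt (hU.mem_nhds hx)).differentiableAt (by simp)).hasFDerivAt
  have hlv : l • v ∈ A₀ \ {0} := ⟨hconic v hv l hl, by
    simp only [mem_singleton_iff, smul_eq_zero, not_or]
    exact ⟨ne_of_gt hl, hv0⟩⟩
  have hLm : HasFDerivAt (fun x : V => l • x) (l • ContinuousLinearMap.id ℝ V) v :=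
    (l • ContinuousLinearMap.id ℝ V).hasFDerivAt
  have hc : HasFDerivAt (fun x : V => Gsq F₀ (l • x))
      ((fderiv ℝ (Gsq F₀) (l • v)).comp (l • ContinuousLinearMap.id ℝ V)) v :=
    (hdiff _ hlv).comp v hLm
  have hd : HasFDerivAt (fun x : V => l ^ 2 * Gsq F₀ x) (l ^ 2 • fderiv ℝ (Gsq F₀) v) v :=
    (hdiff v ⟨hv, hv0⟩).const_mul (l ^ 2)
  have heq : (fun x : V => l ^ 2 * Gsq F₀ x) =ᶠ[𝓝 v] (fun x : V => Gsq F₀ (l • x)) := by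
    filter_upwards [hA₀.mem_nhds hv] with x hx
    simp only [Gsq, hhom x hx l hl]
    ring
  have := (hc.congr_of_eventuallyEq heq).unique hd
  ext u
  have h2 := congrFun (congrArg (fun (T : V →L[ℝ] ℝ) => (T : V → ℝ)) this) u
  simp only [ContinuousLinearMap.coe_comp', Function.comp_apply,
    ContinuousLinearMap.coe_smul', Pi.smul_apply, ContinuousLinearMap.coe_id', id_eq,
    smul_eq_mul] at h2 ⊢
  have h3 : (fderiv ℝ (Gsq F₀) (l • v)) (l • u) = l ^ 2 * (fderiv ℝ (Gsq F₀) v) u := h2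
  rw [map_smul, smul_eq_mul] at h3
  have hl0 : l ≠ 0 := ne_of_gt hl
  field_simp at h3 ⊢
  nlinarith [h3]

lemma euler2 (hA₀ : IsOpen A₀) (hsm : ContDiffOn ℝ (⊤ : ℕ∞) F₀ (A₀ \ {0}))
    (hhom : ∀ v ∈ A₀, ∀ l : ℝ, 0 < l → F₀ (l • v) = l * F₀ v)
    (hconic : ∀ v ∈ A₀, ∀ l : ℝ, 0 < l → l • v ∈ A₀)
    {v : V} (hv : v ∈ A₀) (hv0 : v ≠ 0) (u : V) :
    fderiv ℝ (fderiv ℝ (Gsq F₀)) v v u = F₀ v * fderiv ℝ F₀ v u := by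
  have hU : IsOpen (A₀ \ {0}) := hA₀.sdiff isClosed_singleton
  have hGsm := Gsq_smooth (A₀ := A₀) hsm
  have hG' : ContDiffAt ℝ 1 (fderiv ℝ (Gsq F₀)) v :=
    (hGsm.contDiffAt (hU.mem_nhds ⟨hv, hv0⟩)).fderiv_right (by norm_cast)
  have hD2 : HasFDerivAt (fderiv ℝ (Gsq F₀)) (fderiv ℝ (fderiv ℝ (Gsq F₀)) v) v :=
    (hG'.differentiableAt one_ne_zero).hasFDerivAt
  have hl : HasDerivAt (fun l : ℝ => l • v) v 1 := by
    simpa using (hasDerivAt_id (1:ℝ)).smul_const v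
  have hA : HasDerivAt (fun l : ℝ => fderiv ℝ (Gsq F₀) (l • v) u)
      (fderiv ℝ (fderiv ℝ (Gsq F₀)) v v u) 1 := by
    have h1 : HasFDerivAt (fun x => fderiv ℝ (Gsq F₀) x u)
        ((ContinuousLinearMap.apply ℝ ℝ u).comp (fderiv ℝ (fderiv ℝ (Gsq F₀)) v)) ((1:ℝ) • v) := by
      rw [one_smul]
      exact (ContinuousLinearMap.apply ℝ ℝ u).hasFDerivAt.comp v hD2
    exact h1.comp_hasDerivAt 1 hl
  have heq : (fun l : ℝ => fderiv ℝ (Gsq F₀) (l • v) u)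
      =ᶠ[𝓝 (1:ℝ)] fun l => l * (fderiv ℝ (Gsq F₀) v u) := by
    filter_upwards [eventually_gt_nhds (show (0:ℝ) < 1 by norm_num)] with l hl'
    rw [fderiv_Gsq_smul hA₀ hsm hhom hconic hv hv0 hl']
    simp
  have hB : HasDerivAt (fun l : ℝ => fderiv ℝ (Gsq F₀) (l • v) u)
      (fderiv ℝ (Gsq F₀) v u) 1 := by
    have : HasDerivAt (fun l : ℝ => l * (fderiv ℝ (Gsq F₀) v u)) (fderiv ℝ (Gsq F₀) v u) 1 := by
      simpa using (hasDerivAt_id (1:ℝ)).mul_const (fderiv ℝ (Gsq F₀) v u)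
    exact this.congr_of_eventuallyEq heq
  have h4 := hA.unique hB
  rw [h4, fderiv_Gsq hA₀ hsm hv hv0]
  simp

lemma Tsymm (hA₀ : IsOpen A₀) (hsm : ContDiffOn ℝ (⊤ : ℕ∞) F₀ (A₀ \ {0}))
    {v : V} (hv : v ∈ A₀) (hv0 : v ≠ 0) (u w : V) :
    fderiv ℝ (fderiv ℝ (Gsq F₀)) v u w = fderiv ℝ (fderiv ℝ (Gsq F₀)) v w u := by
  have hU : IsOpen (A₀ \ {0}) := hA₀.sdiff isClosed_singleton
  have hGsm := Gsq_smooth (A₀ := A₀) hsm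
  have hf : ∀ᶠ y in 𝓝 v, HasFDerivAt (Gsq F₀) (fderiv ℝ (Gsq F₀) y) y := by
    filter_upwards [hU.mem_nhds ⟨hv, hv0⟩] with y hy
    exact ((hGsm.contDiffAt (hU.mem_nhds hy)).differentiableAt (by simp)).hasFDerivAt
  have hG' : ContDiffAt ℝ 1 (fderiv ℝ (Gsq F₀)) v :=
    (hGsm.contDiffAt (hU.mem_nhds ⟨hv, hv0⟩)).fderiv_right (by norm_cast)
  have hD2 : HasFDerivAt (fderiv ℝ (Gsq F₀)) (fderiv ℝ (fderiv ℝ (Gsq F₀)) v) v :=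
    (hG'.differentiableAt one_ne_zero).hasFDerivAt
  exact second_derivative_symmetric_of_eventually hf hD2 u w

end Euler2

section CS

variable {A₀ : Set V} {F₀ : V → ℝ}

lemma fderiv_smul_self (hA₀ : IsOpen A₀) (hsm : ContDiffOn ℝ (⊤ : ℕ∞) F₀ (A₀ \ {0}))
    (hhom : ∀ v ∈ A₀, ∀ l : ℝ, 0 < l → F₀ (l • v) = l * F₀ v)
    {v : V} (hv : v ∈ A₀) (hv0 : v ≠ 0) (l : ℝ) :
    fderiv ℝ F₀ v (l • v) = l * F₀ v := by
  rw [map_smul, euler0 hA₀ hsm hhom hv hv0, smul_eq_mul]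

lemma fund_parallel (hA₀ : IsOpen A₀) (hsm : ContDiffOn ℝ (⊤ : ℕ∞) F₀ (A₀ \ {0}))
    (hhom : ∀ v ∈ A₀, ∀ l : ℝ, 0 < l → F₀ (l • v) = l * F₀ v)
    (hconic : ∀ v ∈ A₀, ∀ l : ℝ, 0 < l → l • v ∈ A₀)
    {v : V} (hv : v ∈ A₀) (hv0 : v ≠ 0) (l : ℝ) :
    fundTensor F₀ v (l • v) (l • v) = (l * F₀ v) ^ 2 := by
  rw [fund_eq_T hA₀ hsm hv hv0]
  simp only [map_smul, ContinuousLinearMap.smul_apply, smul_eq_mul]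
  rw [euler2 hA₀ hsm hhom hconic hv hv0 v, euler0 hA₀ hsm hhom hv hv0]
  ring

lemma fund_strict (hA₀ : IsOpen A₀) (hsm : ContDiffOn ℝ (⊤ : ℕ∞) F₀ (A₀ \ {0}))
    (hhom : ∀ v ∈ A₀, ∀ l : ℝ, 0 < l → F₀ (l • v) = l * F₀ v)
    (hconic : ∀ v ∈ A₀, ∀ l : ℝ, 0 < l → l • v ∈ A₀)
    (hpos : ∀ v ∈ A₀, v ≠ 0 → ∀ w : V, w ≠ 0 → 0 < fundTensor F₀ v w w)
    {v : V} (hv : v ∈ A₀) (hv0 : v ≠ 0) (ha : 0 < F₀ v)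
    {w : V} (hw : ∀ l : ℝ, w ≠ l • v) :
    (fderiv ℝ F₀ v w) ^ 2 < fundTensor F₀ v w w := by
  set a := F₀ v with ha'
  set p := fderiv ℝ F₀ v w with hp'
  set l := p / a with hl'
  set w₀ := w - l • v with hw₀'
  have hw₀0 : w₀ ≠ 0 := by
    intro h
    exact hw l (by rw [← sub_eq_zero]; exact h)
  have hpw₀ : fderiv ℝ F₀ v w₀ = 0 := by
    rw [hw₀', map_sub, fderiv_smul_self hA₀ hsm hhom hv hv0, hl']
    field_simp
    simp only [hp', ha']; ring
  set T := fderiv ℝ (fderiv ℝ (Gsq F₀)) v with hT'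
  have hTvu : ∀ u, T v u = a * fderiv ℝ F₀ v u := fun u =>
    euler2 hA₀ hsm hhom hconic hv hv0 u
  have hsymm : ∀ u u', T u u' = T u' u := fun u u' => Tsymm hA₀ hsm hv hv0 u u'
  have hww : fundTensor F₀ v w w = T w w := fund_eq_T hA₀ hsm hv hv0 w w
  have hw₀w₀ : fundTensor F₀ v w₀ w₀ = T w₀ w₀ := fund_eq_T hA₀ hsm hv hv0 w₀ w₀
  have hwdecomp : w = l • v + w₀ := by rw [hw₀']; abel
  have hexp : T w w = l ^ 2 * T v v + l * T v w₀ + l * T w₀ v + T w₀ w₀ := by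
    rw [hwdecomp]
    simp only [map_add, map_smul, ContinuousLinearMap.add_apply,
      ContinuousLinearMap.smul_apply, smul_eq_mul]
    ring
  have hTvv : T v v = a * a := by rw [hTvu v, euler0 hA₀ hsm hhom hv hv0]
  have hTvw₀ : T v w₀ = 0 := by rw [hTvu w₀, hpw₀]; ring
  have hTw₀v : T w₀ v = 0 := by rw [hsymm w₀ v, hTvw₀]
  have hpw : p = l * a := by rw [hl']; field_simp
  have hposw₀ : 0 < T w₀ w₀ := by rw [← hw₀w₀]; exact hpos v hv hv0 w₀ hw₀0
  rw [hww, hexp, hTvv, hTvw₀, hTw₀v, hpw]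
  nlinarith [hposw₀]

end CS

section Key

set_option maxHeartbeats 1000000

variable {A₀ : Set V} {F₀ : V → ℝ}

lemma half_sq_eq (q : ℝ) (a' c' : ℝ) (ha' : 0 < a') (hc' : c' ≠ 0) :
    (1/2 : ℝ) * (a' ^ (q+1) / |c'| ^ q) ^ 2 = (1/2 : ℝ) * (a' ^ (2*q+2) * ((c' * c' : ℝ)) ^ (-q)) := by
  have habs : (0:ℝ) < |c'| := abs_pos.mpr hc'
  have h1 : (a' ^ (q+1) / |c'| ^ q : ℝ) ^ 2 = (a' ^ (q+1)) ^ 2 / (|c'| ^ q) ^ 2 := by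
    rw [div_pow]
  have h2 : (a' ^ (q+1) : ℝ) ^ 2 = a' ^ (2*q+2) := by
    rw [sq, ← Real.rpow_add ha']; ring_nf
  have h3 : ((|c'| ^ q : ℝ)) ^ 2 = |c'| ^ (2*q) := by
    rw [sq, ← Real.rpow_add habs]; ring_nf
  have h5 : |c'| * |c'| = |c'| ^ ((2:ℝ)) := by
    rw [show (2:ℝ) = (1:ℝ) + 1 by norm_num, Real.rpow_add habs, Real.rpow_one]
  have h4 : ((c' * c' : ℝ)) ^ (-q) = |c'| ^ (-(2*q)) := by
    rw [← abs_mul_abs_self c', h5, ← Real.rpow_mul (abs_nonneg c')]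
    congr 1
    ring
  rw [h1, h2, h3, h4, Real.rpow_neg (abs_nonneg c')]
  ring

lemma key (hA₀ : IsOpen A₀) (hsm : ContDiffOn ℝ (⊤ : ℕ∞) F₀ (A₀ \ {0}))
    (hpos' : ∀ x ∈ A₀ \ {0}, 0 < F₀ x)
    (β : V →ₗ[ℝ] ℝ) (q : ℝ) {v : V} (hv : v ∈ A₀) (hv0 : v ≠ 0)
    (hc : F₀ v - β v ≠ 0) (w : V) :
    ∃ h : ℝ,
      fundTensor F₀ v w w = (fderiv ℝ F₀ v w) ^ 2 + F₀ v * h ∧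
      fundTensor (fun x => F₀ x ^ (q + 1) / |F₀ x - β x| ^ q) v w w =
        F₀ v ^ (2*q) * ((F₀ v - β v) * (F₀ v - β v)) ^ (-q - 1) *
          ((q+1)*(2*q+1)*(fderiv ℝ F₀ v w)^2*(F₀ v - β v)^2
            - 4*q*(q+1)*(F₀ v)*(F₀ v - β v)*(fderiv ℝ F₀ v w)*(fderiv ℝ F₀ v w - β w)
            + q*(2*q+1)*(F₀ v)^2*(fderiv ℝ F₀ v w - β w)^2
            + (F₀ v)*h*(F₀ v - β v)*(F₀ v - (q+1)*β v)) := by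
  have ha : 0 < F₀ v := hpos' v ⟨hv, hv0⟩
  have hUo : IsOpen (A₀ \ {0}) := hA₀.sdiff isClosed_singleton
  have hcontFβ : ContinuousOn (fun x => F₀ x - β x) (A₀ \ {0}) :=
    hsm.continuousOn.sub (β.continuous_of_finiteDimensional).continuousOn
  have hUopen : IsOpen ((A₀ \ {0}) ∩ (fun x => F₀ x - β x) ⁻¹' {(0:ℝ)}ᶜ) :=
    hcontFβ.isOpen_inter_preimage hUo isOpen_compl_singleton
  have hvU : v ∈ (A₀ \ {0}) ∩ (fun x => F₀ x - β x) ⁻¹' {(0:ℝ)}ᶜ := ⟨⟨hv, hv0⟩, by simpa using hc⟩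
  have hγcont : Continuous (fun t : ℝ => v + t • w) :=
    continuous_const.add (continuous_id.smul continuous_const)
  have hmem : ∀ᶠ t in 𝓝 (0:ℝ), v + t • w ∈ (A₀ \ {0}) ∩ (fun x => F₀ x - β x) ⁻¹' {(0:ℝ)}ᶜ := by
    have h0 : v + (0:ℝ) • w = v := by simp
    have := hγcont.continuousAt (x := (0:ℝ)).preimage_mem_nhds (by rw [h0]; exact hUopen.mem_nhds hvU)
    exact this
  have hγder : ∀ t : ℝ, HasDerivAt (fun t : ℝ => v + t • w) w t := fun t => by
    simpa using ((hasDerivAt_id t).smul_const w).const_add v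
  have h_f : ∀ᶠ t in 𝓝 (0:ℝ), HasDerivAt (fun t : ℝ => F₀ (v + t • w)) (fderiv ℝ F₀ (v + t • w) w) t := by
    filter_upwards [hmem] with t ht
    have hdF : HasFDerivAt F₀ (fderiv ℝ F₀ (v + t • w)) (v + t • w) :=
      ((hsm.contDiffAt (hUo.mem_nhds ht.1)).differentiableAt (by simp)).hasFDerivAt
    exact hdF.comp_hasDerivAt t (hγder t)
  have h_fpos : ∀ᶠ t in 𝓝 (0:ℝ), 0 < F₀ (v + t • w) := by
    filter_upwards [hmem] with t ht
    exact hpos' _ ht.1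
  have hβlin : ∀ t : ℝ, β (v + t • w) = β v + t * β w := by
    intro t; rw [map_add, map_smul, smul_eq_mul]
  have h_cne : ∀ᶠ t in 𝓝 (0:ℝ), (F₀ (v + t • w) - (β v + t * β w)) ≠ 0 := by
    filter_upwards [hmem] with t ht
    have := ht.2
    simp only [mem_preimage, mem_compl_iff, mem_singleton_iff] at this
    rw [← hβlin t]
    exact this
  have hd0diff : DifferentiableAt ℝ (fun t : ℝ => fderiv ℝ F₀ (v + t • w) w) 0 := by
    have h1 : ContDiffAt ℝ 1 (fderiv ℝ F₀) v :=
      (hsm.contDiffAt (hUo.mem_nhds ⟨hv, hv0⟩)).fderiv_right (by norm_cast)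
    have h2 : DifferentiableAt ℝ (fderiv ℝ F₀) (v + (0:ℝ) • w) := by
      rw [show v + (0:ℝ) • w = v by simp]
      exact h1.differentiableAt one_ne_zero
    have h3 : DifferentiableAt ℝ (fun t : ℝ => v + t • w) 0 := (hγder 0).differentiableAt
    have h4 : DifferentiableAt ℝ (fun t : ℝ => fderiv ℝ F₀ (v + t • w)) 0 := h2.comp 0 h3
    exact (ContinuousLinearMap.apply ℝ ℝ w).differentiableAt.comp 0 h4
  have hd0 : HasDerivAt (fun t : ℝ => fderiv ℝ F₀ (v + t • w) w) (deriv (fun t : ℝ => fderiv ℝ F₀ (v + t • w) w) 0) 0 :=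
    hd0diff.hasDerivAt
  have hft0 : HasDerivAt (fun t : ℝ => F₀ (v + t • w)) (fderiv ℝ F₀ (v + (0:ℝ) • w) w) 0 := h_f.self_of_nhds
  have hfpos0 : 0 < F₀ (v + (0:ℝ) • w) := h_fpos.self_of_nhds
  have hcne0 : (F₀ (v + (0:ℝ) • w) - (β v + (0:ℝ) * β w)) ≠ 0 := h_cne.self_of_nhds
  refine ⟨deriv (fun t : ℝ => fderiv ℝ F₀ (v + t • w) w) 0, ?_, ?_⟩
  · -- fundTensor F₀
    have hχ : ∀ᶠ t in 𝓝 (0:ℝ), HasDerivAt (fun t : ℝ => (1/2 : ℝ) * (F₀ (v + t • w) * F₀ (v + t • w)))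
        ((1/2 : ℝ) * (fderiv ℝ F₀ (v + t • w) w * F₀ (v + t • w) + F₀ (v + t • w) * fderiv ℝ F₀ (v + t • w) w)) t := by
      filter_upwards [h_f] with t ht
      exact (ht.mul ht).const_mul (1/2 : ℝ)
    have hDχ : HasDerivAt (fun t : ℝ => (1/2 : ℝ) * (fderiv ℝ F₀ (v + t • w) w * F₀ (v + t • w) + F₀ (v + t • w) * fderiv ℝ F₀ (v + t • w) w))
        ((1/2 : ℝ) * ((deriv (fun t : ℝ => fderiv ℝ F₀ (v + t • w) w) 0 * F₀ (v + (0:ℝ) • w) + fderiv ℝ F₀ (v + (0:ℝ) • w) w * fderiv ℝ F₀ (v + (0:ℝ) • w) w) +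
          (fderiv ℝ F₀ (v + (0:ℝ) • w) w * fderiv ℝ F₀ (v + (0:ℝ) • w) w + F₀ (v + (0:ℝ) • w) * deriv (fun t : ℝ => fderiv ℝ F₀ (v + t • w) w) 0))) 0 :=
      ((hd0.mul hft0).add (hft0.mul hd0)).const_mul (1/2 : ℝ)
    have hdiag : fundTensor F₀ v w w
        = deriv (deriv (fun t : ℝ => (1 / 2 : ℝ) * (F₀ (v + t • w)) ^ 2)) 0 := diag_eq F₀ v w
    have hfun : (fun t : ℝ => (1 / 2 : ℝ) * (F₀ (v + t • w)) ^ 2)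
        = fun t : ℝ => (1/2 : ℝ) * (F₀ (v + t • w) * F₀ (v + t • w)) := by
      funext t; ring
    rw [hdiag, hfun, deriv2_eq_of_hasDerivAt hχ hDχ]
    rw [show v + (0:ℝ) • w = v by simp]
    ring
  · -- fundTensor of the Matsumoto metric
    have hP : ∀ᶠ t in 𝓝 (0:ℝ), HasDerivAt (fun t : ℝ => (1/2 : ℝ) * (F₀ (v + t • w) ^ (2*q+2) * ((F₀ (v + t • w) - (β v + t * β w)) * (F₀ (v + t • w) - (β v + t * β w))) ^ (-q))) ((1/2 : ℝ) * ((fderiv ℝ F₀ (v + t • w) w * (2*q+2) * F₀ (v + t • w) ^ (2*q+2-1)) * ((F₀ (v + t • w) - (β v + t * β w)) * (F₀ (v + t • w) - (β v + t * β w))) ^ (-q) + F₀ (v + t • w) ^ (2*q+2) * (((fderiv ℝ F₀ (v + t • w) w - β w) * (F₀ (v + t • w) - (β v + t * β w)) + (F₀ (v + t • w) - (β v + t * β w)) * (fderiv ℝ F₀ (v + t • w) w - β w)) * (-q) * ((F₀ (v + t • w) - (β v + t * β w)) * (F₀ (v + t • w) - (β v + t * β w))) ^ (-q-1)))) t :=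 by
      filter_upwards [h_f, h_fpos, h_cne] with t hft hfpos hcne
      have hlin : HasDerivAt (fun t : ℝ => β v + t * β w) (β w) t :=
        (hasDerivAt_mul_const (β w)).const_add (β v)
      have hct : HasDerivAt (fun t : ℝ => (F₀ (v + t • w) - (β v + t * β w))) (fderiv ℝ F₀ (v + t • w) w - β w) t := hft.sub hlin
      have h1 : HasDerivAt (fun t : ℝ => F₀ (v + t • w) ^ (2*q+2))
          (fderiv ℝ F₀ (v + t • w) w * (2*q+2) * F₀ (v + t • w) ^ (2*q+2-1)) t :=
        hft.rpow_const (Or.inl (ne_of_gt hfpos))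
      have h2 : HasDerivAt (fun t : ℝ => (F₀ (v + t • w) - (β v + t * β w)) * (F₀ (v + t • w) - (β v + t * β w)))
          ((fderiv ℝ F₀ (v + t • w) w - β w) * (F₀ (v + t • w) - (β v + t * β w)) + (F₀ (v + t • w) - (β v + t * β w)) * (fderiv ℝ F₀ (v + t • w) w - β w)) t := hct.mul hct
      have h3 : HasDerivAt (fun t : ℝ => ((F₀ (v + t • w) - (β v + t * β w)) * (F₀ (v + t • w) - (β v + t * β w))) ^ (-q))
          (((fderiv ℝ F₀ (v + t • w) w - β w) * (F₀ (v + t • w) - (β v + t * β w)) + (F₀ (v + t • w) - (β v + t * β w)) * (fderiv ℝ F₀ (v + t • w) w - β w)) * (-q) *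
            ((F₀ (v + t • w) - (β v + t * β w)) * (F₀ (v + t • w) - (β v + t * β w))) ^ (-q-1)) t :=
        h2.rpow_const (Or.inl (mul_ne_zero hcne hcne))
      exact (h1.mul h3).const_mul (1/2 : ℝ)
    have hlin0 : HasDerivAt (fun t : ℝ => β v + t * β w) (β w) 0 :=
      (hasDerivAt_mul_const (β w)).const_add (β v)
    have hct0 : HasDerivAt (fun t : ℝ => (F₀ (v + t • w) - (β v + t * β w))) (fderiv ℝ F₀ (v + (0:ℝ) • w) w - β w) 0 := hft0.sub hlin0
    have hdm0 : HasDerivAt (fun t : ℝ => fderiv ℝ F₀ (v + t • w) w - β w) (deriv (fun t : ℝ => fderiv ℝ F₀ (v + t • w) w) 0) 0 :=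
      hd0.sub_const (β w)
    have hcc0 : HasDerivAt (fun t : ℝ => (F₀ (v + t • w) - (β v + t * β w)) * (F₀ (v + t • w) - (β v + t * β w)))
        ((fderiv ℝ F₀ (v + (0:ℝ) • w) w - β w) * (F₀ (v + (0:ℝ) • w) - (β v + (0:ℝ) * β w)) + (F₀ (v + (0:ℝ) • w) - (β v + (0:ℝ) * β w)) * (fderiv ℝ F₀ (v + (0:ℝ) • w) w - β w)) 0 := hct0.mul hct0
    have hT1 := (hd0.mul_const (2*q+2)).mul (hft0.rpow_const (Or.inl (ne_of_gt hfpos0)) (p := 2*q+2-1))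
    have hT2 := hcc0.rpow_const (Or.inl (mul_ne_zero hcne0 hcne0)) (p := -q)
    have hT3 := hft0.rpow_const (Or.inl (ne_of_gt hfpos0)) (p := 2*q+2)
    have hU0 := (hdm0.mul hct0).add (hct0.mul hdm0)
    have hW0 := hcc0.rpow_const (Or.inl (mul_ne_zero hcne0 hcne0)) (p := -q-1)
    have hT4 := (hU0.mul_const (-q)).mul hW0
    have hDP := ((hT1.mul hT2).add (hT3.mul hT4)).const_mul (1/2 : ℝ)
    have hKey := deriv2_eq_of_hasDerivAt hP hDP
    have hdiag := diag_eq (fun x => F₀ x ^ (q + 1) / |F₀ x - β x| ^ q) v w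
    have heqP : (fun t : ℝ =>
          (1 / 2 : ℝ) * ((fun x => F₀ x ^ (q + 1) / |F₀ x - β x| ^ q) (v + t • w)) ^ 2)
        =ᶠ[𝓝 (0:ℝ)] (fun t : ℝ => (1/2 : ℝ) * (F₀ (v + t • w) ^ (2*q+2) * ((F₀ (v + t • w) - (β v + t * β w)) * (F₀ (v + t • w) - (β v + t * β w))) ^ (-q))) := by
      filter_upwards [h_fpos, h_cne] with t hfpos hcne
      show (1 / 2 : ℝ) * (F₀ (v + t • w) ^ (q + 1) / |F₀ (v + t • w) - β (v + t • w)| ^ q) ^ 2 = _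
      rw [hβlin t]
      exact half_sq_eq q _ _ hfpos hcne
    rw [hdiag, (heqP.deriv).deriv_eq, hKey]
    simp only [Pi.mul_apply, Pi.add_apply, Pi.sub_apply]
    rw [show v + (0:ℝ) • w = v by simp]
    simp only [zero_mul, add_zero]
    -- now pure algebra
    set a := F₀ v with ha_def
    set b := (β v : ℝ) with hb_def
    set p := fderiv ℝ F₀ v w with hp_def
    set e := (β w : ℝ) with he_def
    set H := deriv (fun t : ℝ => fderiv ℝ F₀ (v + t • w) w) 0 with hH_def
    have hab : a - b ≠ 0 := hc
    have hccpos : (0:ℝ) < (a - b) * (a - b) := mul_self_pos.mpr hab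
    have hA1 : a ^ (2*q+2) = a ^ (2*q) * (a * a) := by
      rw [show 2*q+2 = 2*q + 1 + 1 by ring, Real.rpow_add ha, Real.rpow_add ha, Real.rpow_one]
      ring
    have hA2 : a ^ (2*q+2-1) = a ^ (2*q) * a := by
      rw [show 2*q+2-1 = 2*q + 1 by ring, Real.rpow_add ha, Real.rpow_one]
    have hA3 : a ^ (2*q+2-1-1) = a ^ (2*q) := by
      rw [show 2*q+2-1-1 = 2*q by ring]
    have hC1 : ((a-b) * (a-b)) ^ (-q) = ((a-b) * (a-b)) ^ (-q-1) * ((a-b) * (a-b)) := by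
      rw [← Real.rpow_add_one (ne_of_gt hccpos) (-q-1)]
      congr 1
      ring
    have hC2 : ((a-b) * (a-b)) ^ (-q-1-1) = ((a-b) * (a-b)) ^ (-q-1) / ((a-b) * (a-b)) := by
      rw [show -q-1-1 = (-q-1) + (-1) by ring, Real.rpow_add hccpos, Real.rpow_neg_one]
      ring
    rw [hA1, hA2, hA3, hC1, hC2]
    generalize ((a-b) * (a-b)) ^ (-q-1) = K
    generalize a ^ (2*q) = Aq
    field_simp
    ring

end Key

section Pos

lemma poly_pos (q a b p e H : ℝ)
    (hcond : 0 < (a - (q+1)*b) * (a - b)) (hqr : 0 < q ∨ q ≤ -1)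
    (hH : 0 < a * H) :
    0 < (q+1)*(2*q+1)*p^2*(a-b)^2 - 4*q*(q+1)*a*(a-b)*p*(p-e)
      + q*(2*q+1)*a^2*(p-e)^2 + a*H*(a-b)*(a - (q+1)*b) := by
  have hδ : 0 < q*(2*q+1) := by
    rcases hqr with h | h
    · nlinarith
    · nlinarith
  have hqq : 0 ≤ q*(q+1) := by
    rcases hqr with h | h
    · nlinarith
    · nlinarith
  have hsq := sq_nonneg (q*(2*q+1)*a*(p-e) - 2*q*(q+1)*(a-b)*p)
  have h1 : 0 ≤ q*(2*q+1) * ((q+1)*(2*q+1)*p^2*(a-b)^2 - 4*q*(q+1)*a*(a-b)*p*(p-e)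
      + q*(2*q+1)*a^2*(p-e)^2) := by
    nlinarith [hsq, mul_nonneg hqq (sq_nonneg ((a-b)*p))]
  have hQ : 0 ≤ (q+1)*(2*q+1)*p^2*(a-b)^2 - 4*q*(q+1)*a*(a-b)*p*(p-e)
      + q*(2*q+1)*a^2*(p-e)^2 := nonneg_of_mul_nonneg_right h1 hδ
  have hT : 0 < a*H*(a-b)*(a - (q+1)*b) := by nlinarith [mul_pos hH hcond]
  linarith

end Pos

section Main

variable {A₀ : Set V} {F₀ : V → ℝ}

lemma main_pos (hA₀ : IsOpen A₀) (hsm : ContDiffOn ℝ (⊤ : ℕ∞) F₀ (A₀ \ {0}))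
    (hpos' : ∀ x ∈ A₀ \ {0}, 0 < F₀ x)
    (hhom : ∀ v ∈ A₀, ∀ l : ℝ, 0 < l → F₀ (l • v) = l * F₀ v)
    (hconic : ∀ v ∈ A₀, ∀ l : ℝ, 0 < l → l • v ∈ A₀)
    (hpd : ∀ v ∈ A₀, v ≠ 0 → ∀ w : V, w ≠ 0 → 0 < fundTensor F₀ v w w)
    (β : V →ₗ[ℝ] ℝ) (q : ℝ) (hqr : 0 < q ∨ q ≤ -1)
    {v : V} (hv : v ∈ A₀) (hv0 : v ≠ 0)
    (hcond : 0 < (F₀ v - (q+1) * β v) * (F₀ v - β v))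
    (w : V) (hw : w ≠ 0) :
    0 < fundTensor (fun x => F₀ x ^ (q + 1) / |F₀ x - β x| ^ q) v w w := by
  have hc : F₀ v - β v ≠ 0 := by
    intro h; rw [h] at hcond; simp at hcond
  have ha : 0 < F₀ v := hpos' v ⟨hv, hv0⟩
  obtain ⟨h, hm, hval⟩ := key hA₀ hsm hpos' β q hv hv0 hc w
  have hKpos : 0 < F₀ v ^ (2*q) * ((F₀ v - β v) * (F₀ v - β v)) ^ (-q - 1) :=
    mul_pos (Real.rpow_pos_of_pos ha _) (Real.rpow_pos_of_pos (mul_self_pos.mpr hc) _)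
  rw [hval]
  by_cases hpar : ∃ l : ℝ, w = l • v
  · obtain ⟨l, rfl⟩ := hpar
    have hl0 : l ≠ 0 := by
      intro h'; rw [h', zero_smul] at hw; exact hw rfl
    have hp : fderiv ℝ F₀ v (l • v) = l * F₀ v := fderiv_smul_self hA₀ hsm hhom hv hv0 l
    have hmval : fundTensor F₀ v (l • v) (l • v) = (l * F₀ v) ^ 2 :=
      fund_parallel hA₀ hsm hhom hconic hv hv0 l
    have hah : F₀ v * h = 0 := by
      rw [hmval, hp] at hm; linarith
    have he : β (l • v) = l * β v := by rw [map_smul, smul_eq_mul]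
    rw [hp, he]
    have hpoly : (q+1)*(2*q+1)*(l * F₀ v)^2*(F₀ v - β v)^2
        - 4*q*(q+1)*(F₀ v)*(F₀ v - β v)*(l * F₀ v)*(l * F₀ v - l * β v)
        + q*(2*q+1)*(F₀ v)^2*(l * F₀ v - l * β v)^2
        + (F₀ v)*h*(F₀ v - β v)*(F₀ v - (q+1)*β v)
        = l^2 * (F₀ v)^2 * (F₀ v - β v)^2 := by
      rw [show (F₀ v)*h*(F₀ v - β v)*(F₀ v - (q+1)*β v)
          = (F₀ v * h) * ((F₀ v - β v)*(F₀ v - (q+1)*β v)) by ring, hah]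
      ring
    rw [hpoly]
    have : 0 < l^2 * (F₀ v)^2 * (F₀ v - β v)^2 := by positivity
    exact mul_pos hKpos this
  · push_neg at hpar
    have hstrict : (fderiv ℝ F₀ v w) ^ 2 < fundTensor F₀ v w w :=
      fund_strict hA₀ hsm hhom hconic hpd hv hv0 ha hpar
    have hH : 0 < F₀ v * h := by rw [hm] at hstrict; linarith
    exact mul_pos hKpos (poly_pos q (F₀ v) (β v) (fderiv ℝ F₀ v w) (β w) h hcond hqr hH)

end Main


/-- Matsumoto-type metrics `F = F₀^{q+1}/|F₀ − β|^q` (`q ≠ 0`): `F` is a Minkowski conic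
pseudo-norm on `A = {F₀ ≠ β}`; for `q > 0` or `q ≤ −1` it is a Minkowski conic norm on
`A* = {(F₀ − (q+1)β)(F₀ − β) > 0}`; for `dim V > 2` the fundamental tensor is not
positive definite at any point of `A ∖ A*`; and the classical Matsumoto metric
`F₀²/|F₀ − β|` has positive definite fundamental tensor on `{(F₀ − 2β)(F₀ − β) > 0}`. -/
theorem stmt18 {A₀ : Set V} {F₀ : V → ℝ} (hF₀ : IsMinkowskiConicNorm A₀ F₀)
    (β : V →ₗ[ℝ] ℝ) (q : ℝ) (hq : q ≠ 0)
    (A Astar : Set V)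
    (hAdef : A = {v : V | v ∈ A₀ ∧ F₀ v ≠ β v})
    (hAstardef : Astar = {v : V | v ∈ A₀ ∧ 0 < (F₀ v - (q + 1) * β v) * (F₀ v - β v)})
    (hAne : A.Nonempty) (hAstarne : Astar.Nonempty)
    (F : V → ℝ) (hFdef : F = fun v => F₀ v ^ (q + 1) / |F₀ v - β v| ^ q) :
    IsMinkowskiConicPseudoNorm A F ∧
    ((0 < q ∨ q ≤ -1) → IsMinkowskiConicNorm Astar F) ∧
    (2 < Module.finrank ℝ V →
      ∀ v ∈ A \ Astar, v ≠ 0 → ¬ (∀ w : V, w ≠ 0 → 0 < fundTensor F v w w)) ∧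
    (∀ v ∈ A₀, 0 < (F₀ v - 2 * β v) * (F₀ v - β v) → v ≠ 0 →
      ∀ w : V, w ≠ 0 →
        0 < fundTensor (fun u => (F₀ u) ^ 2 / |F₀ u - β u|) v w w) := by
  subst hAdef hAstardef hFdef
  obtain ⟨hpn, hpd⟩ := hF₀
  obtain ⟨hA₀ne, hA₀open, hA₀conic⟩ := hpn.conic
  have hnn := hpn.nonneg
  have hez := hpn.eq_zero
  have hhom := hpn.homog
  have hsm := hpn.smooth
  have hUo : IsOpen (A₀ \ {0}) := hA₀open.sdiff isClosed_singleton
  have hpos' : ∀ x ∈ A₀ \ {0}, 0 < F₀ x := fun x hx =>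
    lt_of_le_of_ne (hnn x hx.1) (fun h => hx.2 (mem_singleton_iff.mpr (hez x hx.1 h.symm)))
  have hF₀0 : (0:V) ∈ A₀ → F₀ 0 = 0 := by
    intro h0
    have h2 := hhom 0 h0 2 (by norm_num)
    rw [smul_zero] at h2
    linarith
  have hβcont : Continuous (fun x : V => (β x : ℝ)) := β.continuous_of_finiteDimensional
  have hcontFβ : ContinuousOn (fun x => F₀ x - β x) (A₀ \ {0}) :=
    hsm.continuousOn.sub hβcont.continuousOn
  have hsetA : {v : V | v ∈ A₀ ∧ F₀ v ≠ β v}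
      = (A₀ \ {0}) ∩ (fun x => F₀ x - β x) ⁻¹' {(0:ℝ)}ᶜ := by
    ext x
    simp only [mem_setOf_eq, mem_inter_iff, mem_diff, mem_preimage, mem_compl_iff,
      mem_singleton_iff]
    constructor
    · rintro ⟨h1, h2⟩
      refine ⟨⟨h1, fun h0 => ?_⟩, sub_ne_zero.mpr h2⟩
      subst h0
      exact h2 (by rw [hF₀0 h1, map_zero])
    · rintro ⟨⟨h1, _⟩, h3⟩
      exact ⟨h1, sub_ne_zero.mp h3⟩
  have hsetAstar : {v : V | v ∈ A₀ ∧ 0 < (F₀ v - (q + 1) * β v) * (F₀ v - β v)}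
      = (A₀ \ {0}) ∩ (fun x => (F₀ x - (q + 1) * β x) * (F₀ x - β x)) ⁻¹' (Ioi (0:ℝ)) := by
    ext x
    simp only [mem_setOf_eq, mem_inter_iff, mem_diff, mem_preimage, mem_Ioi,
      mem_singleton_iff]
    constructor
    · rintro ⟨h1, h2⟩
      refine ⟨⟨h1, fun h0 => ?_⟩, h2⟩
      subst h0
      rw [hF₀0 h1, map_zero] at h2
      norm_num at h2
    · rintro ⟨⟨h1, _⟩, h3⟩
      exact ⟨h1, h3⟩
  have hAopen : IsOpen {v : V | v ∈ A₀ ∧ F₀ v ≠ β v} := by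
    rw [hsetA]
    exact hcontFβ.isOpen_inter_preimage hUo isOpen_compl_singleton
  have hAstaropen : IsOpen {v : V | v ∈ A₀ ∧ 0 < (F₀ v - (q + 1) * β v) * (F₀ v - β v)} := by
    rw [hsetAstar]
    have hcontP : ContinuousOn (fun x => (F₀ x - (q + 1) * β x) * (F₀ x - β x)) (A₀ \ {0}) :=
      (hsm.continuousOn.sub ((continuous_const.mul hβcont).continuousOn)).mul hcontFβ
    exact hcontP.isOpen_inter_preimage hUo isOpen_Ioi
  -- basic pointwise facts on A
  have hmemA : ∀ v ∈ {v : V | v ∈ A₀ ∧ F₀ v ≠ β v}, v ∈ A₀ ∧ v ≠ 0 ∧ F₀ v - β v ≠ 0 := by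
    intro v hv
    have := hsetA ▸ hv
    exact ⟨this.1.1, this.1.2, this.2⟩
  -- homogeneity of F
  have hFhomog : ∀ v ∈ A₀, v ≠ 0 → F₀ v - β v ≠ 0 → ∀ l : ℝ, 0 < l →
      F₀ (l • v) ^ (q + 1) / |F₀ (l • v) - β (l • v)| ^ q
        = l * (F₀ v ^ (q + 1) / |F₀ v - β v| ^ q) := by
    intro v hv hv0 hc l hl
    rw [hhom v hv l hl, map_smul, smul_eq_mul,
      show l * F₀ v - l * β v = l * (F₀ v - β v) by ring, abs_mul, abs_of_pos hl,
      Real.mul_rpow (le_of_lt hl) (hnn v hv), Real.mul_rpow (le_of_lt hl) (abs_nonneg _),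
      Real.rpow_add_one (ne_of_gt hl) q]
    have h1 : (0:ℝ) < l ^ q := Real.rpow_pos_of_pos hl q
    have h2 : (0:ℝ) < |F₀ v - β v| ^ q := Real.rpow_pos_of_pos (abs_pos.mpr hc) q
    field_simp
  -- smoothness of F on the master set
  have hFsmooth : ContDiffOn ℝ (⊤ : ℕ∞) (fun v => F₀ v ^ (q + 1) / |F₀ v - β v| ^ q)
      ((A₀ \ {0}) ∩ (fun x => F₀ x - β x) ⁻¹' {(0:ℝ)}ᶜ) := by
    have hG : ContDiffOn ℝ (⊤ : ℕ∞)
        (fun x => F₀ x ^ (q + 1) * ((F₀ x - β x) * (F₀ x - β x)) ^ (-(q/2)))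
        ((A₀ \ {0}) ∩ (fun x => F₀ x - β x) ⁻¹' {(0:ℝ)}ᶜ) := by
      intro x hx
      have hcx : F₀ x - β x ≠ 0 := by simpa using hx.2
      have h1 : ContDiffAt ℝ (⊤ : ℕ∞) F₀ x := hsm.contDiffAt (hUo.mem_nhds hx.1)
      have hβc : ContDiffAt ℝ (⊤ : ℕ∞) (fun y : V => (β y : ℝ)) x :=
        (β.toContinuousLinearMap.contDiff).contDiffAt
      have h2 : ContDiffAt ℝ (⊤ : ℕ∞) (fun y => F₀ y - β y) x := h1.sub hβc
      have hcc : ContDiffAt ℝ (⊤ : ℕ∞) (fun y => (F₀ y - β y) * (F₀ y - β y)) x := h2.mul h2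
      have h3 : ContDiffAt ℝ (⊤ : ℕ∞) (fun y => ((F₀ y - β y) * (F₀ y - β y)) ^ (-(q/2))) x :=
        hcc.rpow_const_of_ne (mul_ne_zero hcx hcx)
      have h4 : ContDiffAt ℝ (⊤ : ℕ∞) (fun y => F₀ y ^ (q + 1)) x :=
        h1.rpow_const_of_ne (ne_of_gt (hpos' x hx.1))
      exact (h4.mul h3).contDiffWithinAt
    refine hG.congr ?_
    intro x hx
    have hcx : F₀ x - β x ≠ 0 := by simpa using hx.2
    have habs : (0:ℝ) < |F₀ x - β x| := abs_pos.mpr hcx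
    have h5 : (F₀ x - β x) * (F₀ x - β x) = |F₀ x - β x| ^ ((2:ℝ)) := by
      rw [show (2:ℝ) = (1:ℝ) + 1 by norm_num, Real.rpow_add habs, Real.rpow_one,
        ← abs_mul_abs_self (F₀ x - β x)]
    have h6 : ((F₀ x - β x) * (F₀ x - β x)) ^ (-(q/2)) = (|F₀ x - β x| ^ q)⁻¹ := by
      rw [h5, ← Real.rpow_mul (abs_nonneg _), show (2:ℝ) * -(q/2) = -q by ring,
        Real.rpow_neg (abs_nonneg _)]
    rw [h6, div_eq_mul_inv]
  constructor
  · -- the pseudo-norm on A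
    refine ⟨⟨hAne, hAopen, ?_⟩, ?_, ?_, ?_, ?_⟩
    · intro v hv l hl
      obtain ⟨h1, h2, h3⟩ := hmemA v hv
      refine ⟨hA₀conic v h1 l hl, ?_⟩
      rw [hhom v h1 l hl, map_smul, smul_eq_mul]
      exact fun h => (sub_ne_zero.mp h3) (mul_left_cancel₀ (ne_of_gt hl) h)
    · intro v hv
      exact div_nonneg (Real.rpow_nonneg (hnn v hv.1) _) (Real.rpow_nonneg (abs_nonneg _) _)
    · intro v hv hF
      by_contra hv0
      obtain ⟨h1, h2, h3⟩ := hmemA v hv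
      have : (0:ℝ) < F₀ v ^ (q + 1) / |F₀ v - β v| ^ q :=
        div_pos (Real.rpow_pos_of_pos (hpos' v ⟨h1, hv0⟩) _)
          (Real.rpow_pos_of_pos (abs_pos.mpr h3) _)
      rw [hF] at this
      exact lt_irrefl 0 this
    · intro v hv l hl
      obtain ⟨h1, h2, h3⟩ := hmemA v hv
      exact hFhomog v h1 h2 h3 l hl
    · rw [hsetA]
      exact hFsmooth.mono diff_subset
  refine ⟨?_, ?_, ?_⟩
  · -- the conic norm on A*
    intro hqr
    have hsub : {v : V | v ∈ A₀ ∧ 0 < (F₀ v - (q + 1) * β v) * (F₀ v - β v)}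
        ⊆ {v : V | v ∈ A₀ ∧ F₀ v ≠ β v} := by
      intro v hv
      refine ⟨hv.1, fun h => ?_⟩
      have := hv.2
      rw [show F₀ v - β v = 0 by rw [h]; ring] at this
      norm_num at this
    constructor
    · refine ⟨⟨hAstarne, hAstaropen, ?_⟩, ?_, ?_, ?_, ?_⟩
      · intro v hv l hl
        refine ⟨hA₀conic v hv.1 l hl, ?_⟩
        rw [hhom v hv.1 l hl, map_smul, smul_eq_mul]
        have h2 := hv.2
        calc (0:ℝ) < l^2 * ((F₀ v - (q + 1) * β v) * (F₀ v - β v)) := by positivity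
        _ = (l * F₀ v - (q + 1) * (l * β v)) * (l * F₀ v - l * β v) := by ring
      · intro v hv
        exact div_nonneg (Real.rpow_nonneg (hnn v hv.1) _) (Real.rpow_nonneg (abs_nonneg _) _)
      · intro v hv hF
        by_contra hv0
        obtain ⟨h1, h2, h3⟩ := hmemA v (hsub hv)
        have : (0:ℝ) < F₀ v ^ (q + 1) / |F₀ v - β v| ^ q :=
          div_pos (Real.rpow_pos_of_pos (hpos' v ⟨h1, hv0⟩) _)
            (Real.rpow_pos_of_pos (abs_pos.mpr h3) _)
        rw [hF] at this
        exact lt_irrefl 0 this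
      · intro v hv l hl
        obtain ⟨h1, h2, h3⟩ := hmemA v (hsub hv)
        exact hFhomog v h1 h2 h3 l hl
      · refine (hFsmooth.mono ?_)
        refine subset_trans diff_subset ?_
        rw [← hsetA]
        exact hsub
    · intro v hv hv0 w hw
      exact main_pos hA₀open hsm hpos' hhom hA₀conic hpd β q hqr hv.1 hv0 hv.2 w hw
  · -- non-positive-definiteness on A \ A*
    intro hdim v hv hv0 hposdef
    obtain ⟨h1, h2, h3⟩ := hmemA v hv.1
    have ha : 0 < F₀ v := hpos' v ⟨h1, hv0⟩
    have hPle : (F₀ v - (q + 1) * β v) * (F₀ v - β v) ≤ 0 := by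
      have := hv.2
      simp only [mem_setOf_eq, not_and] at this
      exact le_of_not_gt (this h1)
    -- find w in the kernel of both functionals
    obtain ⟨w, hw0, hφ, hβw⟩ : ∃ w : V, w ≠ 0 ∧ fderiv ℝ F₀ v w = 0 ∧ β w = 0 := by
      set L : V →ₗ[ℝ] ℝ × ℝ := LinearMap.prod ((fderiv ℝ F₀ v) : V →ₗ[ℝ] ℝ) β with hL
      have hrk := L.finrank_range_add_finrank_ker
      have hle : Module.finrank ℝ (LinearMap.range L) ≤ 2 := by
        have h4 := Submodule.finrank_le (LinearMap.range L)
        have h5 : Module.finrank ℝ (ℝ × ℝ) = 2 := by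
          simp [Module.finrank_prod]
        omega
      have hker : 0 < Module.finrank ℝ (LinearMap.ker L) := by omega
      obtain ⟨x, hx⟩ := Module.finrank_pos_iff_exists_ne_zero.mp hker
      have hx2 : L x.1 = 0 := LinearMap.mem_ker.mp x.2
      refine ⟨x.1, by simpa using hx, ?_, ?_⟩
      · exact congrArg Prod.fst hx2
      · exact congrArg Prod.snd hx2
    obtain ⟨h, hm, hval⟩ := key hA₀open hsm hpos' β q h1 hv0 h3 w
    have hpar : ∀ l : ℝ, w ≠ l • v := by
      intro l hl
      have := fderiv_smul_self hA₀open hsm hhom h1 hv0 l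
      rw [← hl, hφ] at this
      have hl0 : l = 0 := by
        rcases mul_eq_zero.mp this.symm with h' | h'
        · exact h'
        · exact absurd h' (ne_of_gt ha)
      rw [hl0, zero_smul] at hl
      exact hw0 hl
    have hstrict : (fderiv ℝ F₀ v w) ^ 2 < fundTensor F₀ v w w :=
      fund_strict hA₀open hsm hhom hA₀conic hpd h1 hv0 ha hpar
    have hH : 0 < F₀ v * h := by
      rw [hm, hφ] at hstrict
      nlinarith [hstrict]
    have hKpos : 0 < F₀ v ^ (2*q) * ((F₀ v - β v) * (F₀ v - β v)) ^ (-q - 1) :=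
      mul_pos (Real.rpow_pos_of_pos ha _) (Real.rpow_pos_of_pos (mul_self_pos.mpr h3) _)
    have hcontra := hposdef w hw0
    rw [hval, hφ, hβw] at hcontra
    nlinarith [hcontra, hKpos, hH, hPle, mul_pos hH hKpos]
  · -- the classical Matsumoto metric
    intro v hv hcond2 hv0 w hw
    have hfun : (fun u => (F₀ u) ^ 2 / |F₀ u - β u|)
        = fun u => F₀ u ^ ((1:ℝ) + 1) / |F₀ u - β u| ^ (1:ℝ) := by
      funext u
      rw [Real.rpow_one, show (1:ℝ) + 1 = ((2:ℕ):ℝ) by norm_num, Real.rpow_natCast]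
    rw [hfun]
    exact main_pos hA₀open hsm hpos' hhom hA₀conic hpd β 1 (Or.inl one_pos) hv hv0
      (by rw [show (1:ℝ) + 1 = 2 by norm_num]; exact hcond2) w hw
end

section
/- Let F₀ be a Minkowski conic norm on V with conic domain A₀ and fundamental tensor g⁰, and let β be a linear form on V. Then the Randers-type function F = F₀ + β, defined on the conic domain A = {v ∈ A₀ : F₀(v) + β(v) > 0}, is a Minkowski conic norm on A, and its fundamental tensor is given by g_v(w,w) = ((F₀(v) + β(v))/F₀(v)) h⁰_v(w,w) + (g⁰_v(v,w)/F₀(v) + β(w))² for all v ∈ A ∖ {0} and w ∈ V, where h⁰_v is the angular metric of F₀. -/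
set_option maxHeartbeats 1000000


open Set Topology

variable {V : Type*} [NormedAddCommGroup V] [NormedSpace ℝ V] [FiniteDimensional ℝ V]

section randersAux

/-- Derivative of a function along a line. -/
private lemma line_hasDerivAt {E : Type*} [NormedAddCommGroup E] [NormedSpace ℝ E]
    {F : V → E} {p : V} (hd : DifferentiableAt ℝ F p) (u : V) :
    HasDerivAt (fun t : ℝ => F (p + t • u)) (fderiv ℝ F p u) 0 := by
  have hline : HasDerivAt (fun t : ℝ => p + t • u) u 0 := by
    simpa using ((hasDerivAt_id (0 : ℝ)).smul_const u).const_add p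
  exact hd.hasFDerivAt.comp_hasDerivAt_of_eq 0 hline (by simp)

/-- The fundamental-tensor computation: for `F = F₀ + β` with `F₀` smooth near `v`,
`g_v(u,w) = (dF₀(u)+β u)(dF₀(w)+β w) + F(v)·HessF₀(u,w)`. -/
private lemma fund_formula {A₀ : Set V} {F₀ : V → ℝ} (hO : IsOpen A₀)
    (hsm : ContDiffOn ℝ (⊤ : ℕ∞) F₀ (A₀ \ {0})) {v : V} (hv : v ∈ A₀) (hv0 : v ≠ 0)
    (β : V →ₗ[ℝ] ℝ) (u w : V) :
    fundTensor (fun x => F₀ x + β x) v u w =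
      (fderiv ℝ F₀ v u + β u) * (fderiv ℝ F₀ v w + β w)
        + (F₀ v + β v) * (fderiv ℝ (fderiv ℝ F₀) v u w) := by
  have hUo : IsOpen (A₀ \ {0}) := hO.sdiff isClosed_singleton
  have hvU : v ∈ A₀ \ {0} := ⟨hv, hv0⟩
  have hC : ∀ p ∈ A₀ \ {0}, ContDiffAt ℝ (⊤ : ℕ∞) F₀ p := fun p hp => hsm.contDiffAt (hUo.mem_nhds hp)
  have hdiff : ∀ p ∈ A₀ \ {0}, DifferentiableAt ℝ F₀ p := fun p hp =>
    (hC p hp).differentiableAt (by simp)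
  have hβd : ∀ (p : V) (a : V), HasDerivAt (fun t : ℝ => β (p + t • a)) (β a) 0 := by
    intro p a
    have h := line_hasDerivAt (F := ⇑β.toContinuousLinearMap) (p := p)
      β.toContinuousLinearMap.differentiableAt a
    rw [β.toContinuousLinearMap.fderiv] at h
    simpa using h
  -- inner derivative
  have inner : ∀ p ∈ A₀ \ {0},
      deriv (fun s : ℝ => (1 / 2 : ℝ) * (F₀ (p + s • w) + β (p + s • w)) ^ 2) 0
        = (F₀ p + β p) * (fderiv ℝ F₀ p w + β w) := by
    intro p hp
    have h1 : HasDerivAt (fun s : ℝ => F₀ (p + s • w)) (fderiv ℝ F₀ p w) 0 :=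
      line_hasDerivAt (hdiff p hp) w
    have h3 := (((h1.add (hβd p w)).pow 2).const_mul (1 / 2 : ℝ)).deriv
    rw [show deriv (fun s : ℝ => (1 / 2 : ℝ) * (F₀ (p + s • w) + β (p + s • w)) ^ 2) 0 = _ from h3]
    simp only [zero_smul, add_zero, Pi.add_apply]
    norm_num
    try ring
  -- the outer function is eventually the explicit product
  have hev : ∀ᶠ t : ℝ in 𝓝 0, v + t • u ∈ A₀ \ {0} := by
    have hc : ContinuousAt (fun t : ℝ => v + t • u) 0 := by fun_prop
    exact hc.eventually_mem (by simpa using hUo.mem_nhds hvU)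
  have heq : (fun t : ℝ =>
        deriv (fun s : ℝ => (1 / 2 : ℝ) * (F₀ (v + t • u + s • w) + β (v + t • u + s • w)) ^ 2) 0)
      =ᶠ[𝓝 0] fun t : ℝ =>
        (F₀ (v + t • u) + β (v + t • u)) * (fderiv ℝ F₀ (v + t • u) w + β w) := by
    filter_upwards [hev] with t ht
    exact inner _ ht
  show deriv (fun t : ℝ =>
      deriv (fun s : ℝ => (1 / 2 : ℝ) * (F₀ (v + t • u + s • w) + β (v + t • u + s • w)) ^ 2) 0)
      0 = _
  rw [heq.deriv_eq]
  -- derivatives of the two factors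
  have h1 : HasDerivAt (fun t : ℝ => F₀ (v + t • u) + β (v + t • u))
      (fderiv ℝ F₀ v u + β u) 0 := (line_hasDerivAt (hdiff v hvU) u).add (hβd v u)
  have hDd : DifferentiableAt ℝ (fderiv ℝ F₀) v :=
    ((hC v hvU).fderiv_right (m := 1) (WithTop.coe_le_coe.mpr le_top)).differentiableAt one_ne_zero
  have h2' : HasDerivAt (fun t : ℝ => fderiv ℝ F₀ (v + t • u)) (fderiv ℝ (fderiv ℝ F₀) v u) 0 :=
    line_hasDerivAt hDd u
  have h2 : HasDerivAt (fun t : ℝ => fderiv ℝ F₀ (v + t • u) w + β w)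
      (fderiv ℝ (fderiv ℝ F₀) v u w) 0 := by
    have h := (h2'.clm_apply (hasDerivAt_const 0 w)).add_const (β w)
    simpa using h
  have := (h1.mul h2).deriv
  rw [show deriv (fun t : ℝ => (F₀ (v + t • u) + β (v + t • u)) * (fderiv ℝ F₀ (v + t • u) w + β w)) 0 = _ from this]
  simp only [zero_smul, add_zero]
  try ring

/-- Euler relation: `dF₀_v(v) = F₀(v)`. -/
private lemma euler_one {A₀ : Set V} {F₀ : V → ℝ}
    (hhom : ∀ x ∈ A₀, ∀ l : ℝ, 0 < l → F₀ (l • x) = l * F₀ x) {v : V} (hv : v ∈ A₀)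
    (hd : DifferentiableAt ℝ F₀ v) : fderiv ℝ F₀ v v = F₀ v := by
  have h1 : HasDerivAt (fun t : ℝ => F₀ (v + t • v)) (fderiv ℝ F₀ v v) 0 :=
    line_hasDerivAt hd v
  have hev : (fun t : ℝ => F₀ (v + t • v)) =ᶠ[𝓝 0] fun t => (1 + t) * F₀ v := by
    filter_upwards [eventually_gt_nhds (show (-1 : ℝ) < 0 by norm_num)] with t ht
    have hvt : v + t • v = (1 + t) • v := by rw [add_smul, one_smul]
    rw [hvt, hhom v hv _ (by linarith)]
  have h2 : HasDerivAt (fun t : ℝ => (1 + t) * F₀ v) (F₀ v) 0 := by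
    simpa using ((hasDerivAt_id (0 : ℝ)).const_add 1).mul_const (F₀ v)
  exact h1.unique (h2.congr_of_eventuallyEq hev)

/-- `dF₀` is positively homogeneous of degree 0. -/
private lemma fderiv_homog {A₀ : Set V} {F₀ : V → ℝ} (hO : IsOpen A₀)
    (hsm : ContDiffOn ℝ (⊤ : ℕ∞) F₀ (A₀ \ {0}))
    (hhom : ∀ x ∈ A₀, ∀ l : ℝ, 0 < l → F₀ (l • x) = l * F₀ x)
    (hcon : ∀ x ∈ A₀, ∀ l : ℝ, 0 < l → l • x ∈ A₀)
    {v : V} (hv : v ∈ A₀) (hv0 : v ≠ 0) {l : ℝ} (hl : 0 < l) :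
    fderiv ℝ F₀ (l • v) = fderiv ℝ F₀ v := by
  have hUo : IsOpen (A₀ \ {0}) := hO.sdiff isClosed_singleton
  have hlv : l • v ∈ A₀ \ {0} := ⟨hcon v hv l hl, smul_ne_zero hl.ne' hv0⟩
  have hvU : v ∈ A₀ \ {0} := ⟨hv, hv0⟩
  have hd2 : DifferentiableAt ℝ F₀ (l • v) :=
    (hsm.contDiffAt (hUo.mem_nhds hlv)).differentiableAt (by simp)
  have hd : DifferentiableAt ℝ F₀ v :=
    (hsm.contDiffAt (hUo.mem_nhds hvU)).differentiableAt (by simp)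
  have hin : HasFDerivAt (fun x : V => l • x) (l • ContinuousLinearMap.id ℝ V) v := by
    exact (l • ContinuousLinearMap.id ℝ V).hasFDerivAt (x := v)
  have h1 : HasFDerivAt (fun x : V => F₀ (l • x)) (l • fderiv ℝ F₀ (l • v)) v := by
    have h := hd2.hasFDerivAt.comp v hin
    have e : fderiv ℝ F₀ (l • v) ∘L (l • ContinuousLinearMap.id ℝ V) = l • fderiv ℝ F₀ (l • v) := by
      ext x
      simp [ContinuousLinearMap.map_smul]
    rw [e] at h
    exact h
  have h2 : HasFDerivAt (fun x : V => F₀ (l • x)) (l • fderiv ℝ F₀ v) v := by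
    have hev : (fun x : V => F₀ (l • x)) =ᶠ[𝓝 v] fun x => l * F₀ x := by
      filter_upwards [hO.mem_nhds hv] with x hx using hhom x hx l hl
    have h2' : HasFDerivAt (fun x : V => l * F₀ x) (l • fderiv ℝ F₀ v) v := by
      exact hd.hasFDerivAt.const_smul l
    exact h2'.congr_of_eventuallyEq hev
  exact smul_right_injective (V →L[ℝ] ℝ) hl.ne' (h1.unique h2)

/-- Euler relation for the second derivative: `HessF₀_v(v,·) = 0`. -/
private lemma euler_two {A₀ : Set V} {F₀ : V → ℝ} (hO : IsOpen A₀)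
    (hsm : ContDiffOn ℝ (⊤ : ℕ∞) F₀ (A₀ \ {0}))
    (hhom : ∀ x ∈ A₀, ∀ l : ℝ, 0 < l → F₀ (l • x) = l * F₀ x)
    (hcon : ∀ x ∈ A₀, ∀ l : ℝ, 0 < l → l • x ∈ A₀)
    {v : V} (hv : v ∈ A₀) (hv0 : v ≠ 0) :
    fderiv ℝ (fderiv ℝ F₀) v v = 0 := by
  have hUo : IsOpen (A₀ \ {0}) := hO.sdiff isClosed_singleton
  have hvU : v ∈ A₀ \ {0} := ⟨hv, hv0⟩
  have hDd : DifferentiableAt ℝ (fderiv ℝ F₀) v :=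
    (((hsm.contDiffAt (hUo.mem_nhds hvU)).fderiv_right (m := 1) (WithTop.coe_le_coe.mpr le_top))).differentiableAt one_ne_zero
  have h1 : HasDerivAt (fun t : ℝ => fderiv ℝ F₀ (v + t • v)) (fderiv ℝ (fderiv ℝ F₀) v v) 0 :=
    line_hasDerivAt hDd v
  have hev : (fun t : ℝ => fderiv ℝ F₀ (v + t • v)) =ᶠ[𝓝 0] fun _ => fderiv ℝ F₀ v := by
    filter_upwards [eventually_gt_nhds (show (-1 : ℝ) < 0 by norm_num)] with t ht
    have hvt : v + t • v = (1 + t) • v := by rw [add_smul, one_smul]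
    rw [hvt, fderiv_homog hO hsm hhom hcon hv hv0 (by linarith)]
  have h2 : HasDerivAt (fun t : ℝ => fderiv ℝ F₀ (v + t • v)) 0 0 :=
    (hasDerivAt_const 0 (fderiv ℝ F₀ v)).congr_of_eventuallyEq hev
  exact h1.unique h2

end randersAux

/-- Randers-type metrics: `F = F₀ + β` is a Minkowski conic norm on
`A = {v ∈ A₀ : F₀(v) + β(v) > 0}`, with explicit fundamental tensor. -/
theorem stmt19 {A₀ : Set V} {F₀ : V → ℝ} (hF₀ : IsMinkowskiConicNorm A₀ F₀)
    (β : V →ₗ[ℝ] ℝ)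
    (hne : {v : V | v ∈ A₀ ∧ 0 < F₀ v + β v}.Nonempty) :
    IsMinkowskiConicNorm {v : V | v ∈ A₀ ∧ 0 < F₀ v + β v} (fun v => F₀ v + β v) ∧
    ∀ v ∈ {v : V | v ∈ A₀ ∧ 0 < F₀ v + β v}, v ≠ 0 → ∀ w : V,
      fundTensor (fun u => F₀ u + β u) v w w =
        (F₀ v + β v) / F₀ v * angular F₀ v w
        + (fundTensor F₀ v v w / F₀ v + β w) ^ 2 := by
  obtain ⟨⟨⟨hne₀, hO₀, hcon₀⟩, hnn₀, hz₀, hhom₀, hsm₀⟩, hpos₀⟩ := hF₀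
  set A : Set V := {v : V | v ∈ A₀ ∧ 0 < F₀ v + β v} with hA
  have hA0 : (0 : V) ∉ A := by
    rintro ⟨h0A, h0pos⟩
    have h2 := hhom₀ 0 h0A 2 (by norm_num)
    simp only [smul_zero] at h2
    have hF00 : F₀ 0 = 0 := by linarith
    simp [hF00] at h0pos
  have hAsub : A ⊆ A₀ \ {0} := fun x hx =>
    ⟨hx.1, fun h => hA0 (by rw [Set.mem_singleton_iff] at h; rwa [h] at hx)⟩
  have hF₀pos : ∀ x ∈ A₀, x ≠ 0 → 0 < F₀ x := fun x hx hx0 =>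
    lt_of_le_of_ne (hnn₀ x hx) fun h => hx0 (hz₀ x hx h.symm)
  have hUo : IsOpen (A₀ \ {0}) := hO₀.sdiff isClosed_singleton
  -- the fundamental tensor of F₀ itself
  have hfund₀ : ∀ v ∈ A₀, v ≠ 0 → ∀ u w : V, fundTensor F₀ v u w =
      fderiv ℝ F₀ v u * fderiv ℝ F₀ v w + F₀ v * fderiv ℝ (fderiv ℝ F₀) v u w := by
    intro v hv hv0 u w
    have h := fund_formula hO₀ hsm₀ hv hv0 (0 : V →ₗ[ℝ] ℝ) u w
    simp only [LinearMap.zero_apply, add_zero] at h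
    exact h
  -- key facts at a fixed point
  have hkey : ∀ v ∈ A, v ≠ 0 →
      (∀ w : V, fundTensor (fun u => F₀ u + β u) v w w =
        (F₀ v + β v) / F₀ v * angular F₀ v w
        + (fundTensor F₀ v v w / F₀ v + β w) ^ 2) ∧
      (∀ w : V, w ≠ 0 → 0 < fundTensor (fun u => F₀ u + β u) v w w) := by
    intro v hvA hv0
    obtain ⟨hv, hvpos⟩ := hvA
    have hvU : v ∈ A₀ \ {0} := ⟨hv, hv0⟩
    have hF₀v : 0 < F₀ v := hF₀pos v hv hv0
    have hd : DifferentiableAt ℝ F₀ v :=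
      (hsm₀.contDiffAt (hUo.mem_nhds hvU)).differentiableAt (by simp)
    set D : V →L[ℝ] ℝ := fderiv ℝ F₀ v with hD
    set B : V →L[ℝ] V →L[ℝ] ℝ := fderiv ℝ (fderiv ℝ F₀) v with hB
    have hE1 : D v = F₀ v := euler_one hhom₀ hv hd
    have hE2 : B v = 0 := euler_two hO₀ hsm₀ hhom₀ hcon₀ hv hv0
    have hsymm : ∀ a b : V, B a b = B b a := fun a b =>
      ((hsm₀.contDiffAt (hUo.mem_nhds hvU)).isSymmSndFDerivAt (by rw [minSmoothness_of_isRCLikeNormedField]; exact WithTop.coe_le_coe.mpr le_top)) a b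
    -- fundamental tensors
    have hfundβ : ∀ w : V, fundTensor (fun u => F₀ u + β u) v w w =
        (D w + β w) ^ 2 + (F₀ v + β v) * B w w := by
      intro w
      rw [fund_formula hO₀ hsm₀ hv hv0 β w w]
      ring
    have hfvw : ∀ w : V, fundTensor F₀ v v w = F₀ v * D w := by
      intro w
      rw [hfund₀ v hv hv0 v w, hE1]
      simp [← hB, ← hD, hE2]
    have hang : ∀ w : V, angular F₀ v w = F₀ v * B w w := by
      intro w
      rw [angular, hfund₀ v hv hv0 w w, hfvw w]
      field_simp
      ring
    constructor
    · intro w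
      rw [hfundβ w, hang w, hfvw w]
      field_simp
      ring
    · intro w hw0
      rw [hfundβ w]
      -- decompose w = w' + c • v with dF₀(w') = 0
      set c : ℝ := D w / F₀ v with hc
      set w' : V := w - c • v with hw'
      have hDw' : D w' = 0 := by
        rw [hw', map_sub, map_smul, hE1, smul_eq_mul, hc]
        field_simp
        ring
      have hBw : B w w = B w' w' := by
        have hw : w = w' + c • v := by rw [hw']; abel
        calc B w w = B (w' + c • v) (w' + c • v) := by rw [← hw]
          _ = B w' w' + c * B w' v + (c * B v w' + c * c * B v v) := by
              simp [map_add, map_smul, smul_eq_mul]; ring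
          _ = B w' w' := by
              rw [hsymm w' v]
              simp [hE2]
      rcases eq_or_ne w' 0 with h0 | h0
      · -- w is parallel to v
        have hwc : w = c • v := by
          have h : w - c • v = 0 := hw' ▸ h0
          exact sub_eq_zero.mp h
        have hc0 : c ≠ 0 := by
          intro h
          apply hw0
          rw [hwc, h, zero_smul]
        have hDw : D w = c * F₀ v := by rw [hwc, map_smul, smul_eq_mul, hE1]
        have hβw : β w = c * β v := by rw [hwc, map_smul, smul_eq_mul]
        rw [hBw, h0]
        simp only [map_zero, ContinuousLinearMap.zero_apply, mul_zero, add_zero]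
        rw [hDw, hβw]
        have : (c * F₀ v + c * β v) = c * (F₀ v + β v) := by ring
        rw [this, mul_pow]
        positivity
      · have hpos' := hpos₀ v hv hv0 w' h0
        rw [hfund₀ v hv hv0 w' w', hDw'] at hpos'
        simp only [zero_mul, zero_add] at hpos'
        have hBpos : 0 < B w' w' := by nlinarith [hF₀v]
        have hsq : 0 ≤ (D w + β w) ^ 2 := sq_nonneg _
        rw [hBw]
        nlinarith [mul_pos hvpos hBpos]
  -- assemble the statement
  have hcontA : ContinuousOn (fun x => F₀ x + β x) (A₀ \ {0}) :=
    hsm₀.continuousOn.add β.toContinuousLinearMap.continuous.continuousOn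
  have hAopen : IsOpen A := by
    have hAeq : A = (A₀ \ {0}) ∩ (fun x => F₀ x + β x) ⁻¹' Ioi (0 : ℝ) := by
      ext x
      constructor
      · intro hx
        exact ⟨hAsub hx, hx.2⟩
      · rintro ⟨hx1, hx2⟩
        exact ⟨hx1.1, hx2⟩
    rw [hAeq]
    exact hcontA.isOpen_inter_preimage hUo isOpen_Ioi
  have hAdiff : A \ {0} ⊆ A₀ \ {0} := fun x hx => hAsub hx.1
  refine ⟨⟨⟨⟨hne, hAopen, ?_⟩, ?_, ?_, ?_, ?_⟩, ?_⟩, ?_⟩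
  · -- conic
    intro x hx l hl
    refine ⟨hcon₀ x hx.1 l hl, ?_⟩
    rw [hhom₀ x hx.1 l hl, map_smul, smul_eq_mul]
    have := hx.2
    nlinarith
  · exact fun x hx => hx.2.le
  · exact fun x hx h => absurd h hx.2.ne'
  · intro x hx l hl
    rw [hhom₀ x hx.1 l hl, map_smul, smul_eq_mul]
    ring
  · exact (hsm₀.mono hAdiff).add
      ((β.toContinuousLinearMap.contDiff).contDiffOn.mono hAdiff)
  · exact fun v hv hv0 w hw0 => ((hkey v hv hv0).2 w hw0)
  · exact fun v hv hv0 w => (hkey v hv hv0).1 w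
end
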